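/- The one-rule TRS R = { f(x,x) → x }, in the presence of an additional AC symbol +, has no critical pairs with itself and no critical pairs with the AC axioms AC^±, yet R is not Church–Rosser modulo AC: x + y and f(x + y, y + x) are convertible modulo R ∪ AC but are distinct R-normal forms that are not AC-equivalent. -/

import Mathlib

/-- First-order terms over a signature `F` with natural-number variables. -/
inductive Tm (F : Type) : Type
  | var : Nat → Tm F
  | fn  : F → List (Tm F) → Tm F

namespace Tm

variable {F : Type}

mutual
def subst (σ : Nat → Tm F) : Tm F → Tm F
  | .var n => σ n
  | .fn f ts => .fn f (substList σ ts)
def substList (σ : Nat → Tm F) : List (Tm F) → List (Tm F)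
  | [] => []
  | t :: ts => subst σ t :: substList σ ts
end

mutual
def varsList : Tm F → List Nat
  | .var n => [n]
  | .fn _ ts => varsListL ts
def varsListL : List (Tm F) → List Nat
  | [] => []
  | t :: ts => varsList t ++ varsListL ts
end

/-- The set of variables of a term. -/
def vars (t : Tm F) : Set Nat := {n | n ∈ varsList t}

/-- A term is linear if no variable occurs more than once. -/
def Linear (t : Tm F) : Prop := (varsList t).Nodup

/-- The subterm at a given position (if the position exists). -/
def subtermAt : Tm F → List Nat → Option (Tm F)
  | t, [] => some t
  | .var _, _ :: _ => none
  | .fn _ ts, i :: p =>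
    match ts[i]? with
    | some u => subtermAt u p
    | none => none
  termination_by t p => p.length

/-- Replacement of the subterm at a given position. -/
def replaceAt : Tm F → List Nat → Tm F → Option (Tm F)
  | _, [], s => some s
  | .var _, _ :: _, _ => none
  | .fn f ts, i :: p, s =>
    match ts[i]? with
    | some u => (replaceAt u p s).map fun u' => .fn f (ts.set i u')
    | none => none
  termination_by t p _ => p.length

end Tm

open Tm

/-- A term rewrite system (or equational system): a set of pairs of terms. -/
abbrev TRS (F : Type) := Set (Tm F × Tm F)

/-- Well-formedness of the rules: left-hand sides are not variables and
variables of right-hand sides occur on the left. -/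
def IsTRS {F : Type} (R : TRS F) : Prop :=
  ∀ p ∈ R, (∀ n, p.1 ≠ .var n) ∧ vars p.2 ⊆ vars p.1

def LeftLinear {F : Type} (R : TRS F) : Prop := ∀ p ∈ R, Linear p.1

/-- One-step rewrite relation of a set of rules (closed under contexts and
substitutions). -/
def Rew {F : Type} (R : TRS F) (s t : Tm F) : Prop :=
  ∃ p l r σ, (l, r) ∈ R ∧ subtermAt s p = some (subst σ l) ∧
    replaceAt s p (subst σ r) = some t

/-- Normal forms. -/
def NF {A : Type} (r : A → A → Prop) (a : A) : Prop := ∀ b, ¬ r a b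

/-- The equational theory `∼B` generated by an ES `B`. -/
def simE {F : Type} (B : TRS F) : Tm F → Tm F → Prop :=
  Relation.EqvGen (Rew B)

/-- Rewriting modulo: `∼B · →R · ∼B`. -/
def RewMod {F : Type} (R B : TRS F) (s t : Tm F) : Prop :=
  ∃ s' t', simE B s s' ∧ Rew R s' t' ∧ simE B t' t

def Terminating {F : Type} (R : TRS F) : Prop :=
  WellFounded (fun a b => Rew R b a)

def TerminatingMod {F : Type} (R B : TRS F) : Prop :=
  WellFounded (fun a b => RewMod R B b a)

/-- Conversion modulo `B`: arbitrary sequences of `→R`, `←R` and `∼B` steps. -/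
def ConvMod {F : Type} (R B : TRS F) : Tm F → Tm F → Prop :=
  Relation.ReflTransGen (fun a b => Rew R a b ∨ Rew R b a ∨ simE B a b)

/-- Joinability modulo `B` using the plain rewrite relation:
`→R* · ∼B · ←R*`. -/
def JoinMod {F : Type} (R B : TRS F) (s t : Tm F) : Prop :=
  ∃ u v, Relation.ReflTransGen (Rew R) s u ∧ simE B u v ∧
    Relation.ReflTransGen (Rew R) t v

def ChurchRosserMod {F : Type} (R B : TRS F) : Prop :=
  ∀ s t, ConvMod R B s t → JoinMod R B s t

def Joinable {F : Type} (R : TRS F) (s t : Tm F) : Prop :=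
  ∃ v, Relation.ReflTransGen (Rew R) s v ∧ Relation.ReflTransGen (Rew R) t v

def Confluent {F : Type} (R : TRS F) : Prop :=
  ∀ s t u, Relation.ReflTransGen (Rew R) s t → Relation.ReflTransGen (Rew R) s u →
    Joinable R t u

/-- Renaming a term by a bijection on variables. -/
def rename {F : Type} (ρ : Nat ≃ Nat) (t : Tm F) : Tm F :=
  subst (fun n => .var (ρ n)) t

def VariantTm {F : Type} (s t : Tm F) : Prop := ∃ ρ : Nat ≃ Nat, rename ρ s = t

def VariantRule {F : Type} (p q : Tm F × Tm F) : Prop :=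
  ∃ ρ : Nat ≃ Nat, rename ρ p.1 = q.1 ∧ rename ρ p.2 = q.2

def Unifies {F : Type} (σ : Nat → Tm F) (s t : Tm F) : Prop := subst σ s = subst σ t

/-- Most general unifier. -/
def IsMGU {F : Type} (σ : Nat → Tm F) (s t : Tm F) : Prop :=
  Unifies σ s t ∧ ∀ τ, Unifies τ s t → ∃ δ, ∀ n, τ n = subst δ (σ n)

/-- `CriticalPeak R₁ R₂ t p s u` : `t ←R₁[p] s →R₂[ε] u` is a critical peak
obtained from an overlap of variable-disjoint variants of rules of `R₁`
(inner rule) and `R₂` (root rule). -/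
def CriticalPeak {F : Type} (R₁ R₂ : TRS F) (t : Tm F) (p : List Nat) (s u : Tm F) :
    Prop :=
  ∃ l₁ r₁ l₂ r₂ σ,
    (∃ q ∈ R₁, VariantRule q (l₁, r₁)) ∧
    (∃ q ∈ R₂, VariantRule q (l₂, r₂)) ∧
    (vars l₁ ∪ vars r₁) ∩ (vars l₂ ∪ vars r₂) = ∅ ∧
    (∃ f ts, subtermAt l₂ p = some (.fn f ts) ∧ IsMGU σ l₁ (.fn f ts)) ∧
    (p = [] → ¬ VariantRule (l₁, r₁) (l₂, r₂)) ∧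
    s = subst σ l₂ ∧
    replaceAt s p (subst σ r₁) = some t ∧
    u = subst σ r₂

/-- The set of critical pairs between `R₁` and `R₂`. -/
def CP {F : Type} (R₁ R₂ : TRS F) : Set (Tm F × Tm F) :=
  {tu | ∃ p s, CriticalPeak R₁ R₂ tu.1 p s tu.2}

/-- A critical peak `t ←[p] s →[ε] u` is prime (w.r.t. `R`) if all proper
subterms of `s|p` are in normal form w.r.t. `→R`. -/
def PrimeAt {F : Type} (R : TRS F) (s : Tm F) (p : List Nat) : Prop :=
  ∀ q v, q ≠ [] → subtermAt s (p ++ q) = some v → NF (Rew R) v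

/-- Prime critical pairs of a TRS. -/
def PCP {F : Type} (R : TRS F) : Set (Tm F × Tm F) :=
  {tu | ∃ p s, CriticalPeak R R tu.1 p s tu.2 ∧ PrimeAt R s p}

/-- `E ∪ E⁻¹`. -/
def sympm {F : Type} (E : TRS F) : TRS F :=
  E ∪ {q | ∃ p ∈ E, q = (p.2, p.1)}

/-- Prime critical pairs between `R` and `B^±` (in both directions), where
primality is always checked with respect to `→R`. -/
def PCPpm {F : Type} (R B : TRS F) : Set (Tm F × Tm F) :=
  {tu | ∃ p s, (CriticalPeak R (sympm B) tu.1 p s tu.2 ∨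
                CriticalPeak (sympm B) R tu.1 p s tu.2) ∧ PrimeAt R s p}

/-- The associativity and commutativity axioms for the symbols in `Ac`,
oriented left-to-right. -/
def ACax {F : Type} (Ac : Set F) : TRS F :=
  {q | ∃ f ∈ Ac,
    q = (Tm.fn f [Tm.fn f [Tm.var 0, Tm.var 1], Tm.var 2],
         Tm.fn f [Tm.var 0, Tm.fn f [Tm.var 1, Tm.var 2]]) ∨
    q = (Tm.fn f [Tm.var 0, Tm.var 1], Tm.fn f [Tm.var 1, Tm.var 0])}

/-- AC equivalence of terms. -/
def simAC {F : Type} (Ac : Set F) : Tm F → Tm F → Prop := simE (ACax Ac)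

/-- Peterson–Stickel rewriting: rewriting with AC matching at the redex. -/
def RewPS {F : Type} (Ac : Set F) (R : TRS F) (s t : Tm F) : Prop :=
  ∃ p l r σ w, (l, r) ∈ R ∧ subtermAt s p = some w ∧ simAC Ac w (subst σ l) ∧
    replaceAt s p (subst σ r) = some t

/-- The extended system `R^e`: `R` together with all extensions
`f(f(u,v),x) → f(r,x)` of rules `f(u,v) → r` with `f` an AC symbol
and `x` a fresh variable. -/
def ACExt {F : Type} (Ac : Set F) (R : TRS F) : TRS F :=
  R ∪ {q | ∃ f ∈ Ac, ∃ u v r x, (Tm.fn f [u, v], r) ∈ R ∧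
        x ∉ vars (Tm.fn f [u, v]) ∧ x ∉ vars r ∧
        q = (Tm.fn f [Tm.fn f [u, v], Tm.var x], Tm.fn f [r, Tm.var x])}

/-- Signature with a binary AC symbol `+` and a binary symbol `f`. -/
inductive Sig18 : Type
  | plus | f

/-- The AC axioms for `+`. -/
def AC18 : TRS Sig18 := ACax {Sig18.plus}

/-- The non-left-linear TRS `{f(x,x) → x}`. -/
def R18 : TRS Sig18 := {(Tm.fn Sig18.f [Tm.var 0, Tm.var 0], Tm.var 0)}

/-- The term `x + y`. -/
def t18l : Tm Sig18 := Tm.fn Sig18.plus [Tm.var 0, Tm.var 1]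

/-- The term `f(x + y, y + x)`. -/
def t18r : Tm Sig18 :=
  Tm.fn Sig18.f [Tm.fn Sig18.plus [Tm.var 0, Tm.var 1],
                 Tm.fn Sig18.plus [Tm.var 1, Tm.var 0]]

/-!
The only rule `f(x,x) → x` cannot overlap itself except trivially at the root, because its
left-hand side has variables directly below the root, and it cannot overlap an AC axiom in
either direction, because AC axioms contain only `+` while its left-hand side is rooted at `f`.
Yet `x + y ←R f(x+y, x+y) ∼AC f(x+y, y+x)`, and both ends are `R`-normal forms: `x + y`
contains no `f`, and in `f(x+y, y+x)` the two arguments differ syntactically. They are not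
AC-equivalent, since AC steps preserve the number of function symbols (1 against 3).
-/

namespace Tm

variable {F : Type}

theorem subtermAt_var {n : ℕ} {p : List ℕ} {t : Tm F} (h : subtermAt (var n) p = some t) :
    t = var n := by
  cases p <;> simp_all [subtermAt]

theorem exists_mem_subtermAt_of_fn_cons {g : F} {ts : List (Tm F)} {i : ℕ} {p : List ℕ}
    {t : Tm F} (h : subtermAt (fn g ts) (i :: p) = some t) :
    ∃ u ∈ ts, subtermAt u p = some t := by
  cases hu : ts[i]? with
  | none => simp [subtermAt, hu] at h
  | some u =>
    simp only [subtermAt, hu] at h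
    exact ⟨u, List.mem_of_getElem? hu, h⟩

theorem substList_eq_map (σ : ℕ → Tm F) (ts : List (Tm F)) :
    substList σ ts = ts.map (subst σ) := by
  induction ts with
  | nil => rfl
  | cons t ts ih => simp [substList, ih]

inductive SymbolsIn (S : Set F) : Tm F → Prop
  | var (n : ℕ) : SymbolsIn S (Tm.var n)
  | fn {g : F} {ts : List (Tm F)} : g ∈ S → (∀ u ∈ ts, SymbolsIn S u) →
      SymbolsIn S (Tm.fn g ts)

namespace SymbolsIn

variable {S : Set F}

theorem mem_of_subtermAt {t : Tm F} (ht : SymbolsIn S t) {p : List ℕ} {g : F}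
    {ts : List (Tm F)} (h : subtermAt t p = some (Tm.fn g ts)) : g ∈ S := by
  induction p generalizing t with
  | nil =>
    simp only [subtermAt, Option.some.injEq] at h
    subst h
    cases ht with
    | fn hg _ => exact hg
  | cons i p ih =>
    cases ht with
    | var n => cases subtermAt_var h
    | fn _ hus =>
      obtain ⟨u, hu, h⟩ := exists_mem_subtermAt_of_fn_cons h
      exact ih (hus u hu) h

theorem subst {σ : ℕ → Tm F} (hσ : ∀ n, SymbolsIn S (σ n)) {t : Tm F} (ht : SymbolsIn S t) :
    SymbolsIn S (Tm.subst σ t) := by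
  induction ht with
  | var n => exact hσ n
  | fn hg _ ih =>
    rw [Tm.subst, substList_eq_map]
    refine .fn hg fun u hu => ?_
    obtain ⟨v, hv, rfl⟩ := List.mem_map.1 hu
    exact ih v hv

theorem rename (ρ : ℕ ≃ ℕ) {t : Tm F} (ht : SymbolsIn S t) :
    SymbolsIn S (_root_.rename ρ t) :=
  ht.subst fun n => .var (ρ n)

end SymbolsIn

mutual
def weight (w : F → ℕ) : Tm F → ℕ
  | .var _ => 0
  | .fn g ts => w g + weightList w ts
def weightList (w : F → ℕ) : List (Tm F) → ℕ
  | [] => 0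
  | t :: ts => weight w t + weightList w ts
end

theorem weightList_set (w : F → ℕ) {ts : List (Tm F)} {i : ℕ} {u u' : Tm F}
    (hu : ts[i]? = some u) (h : weight w u' = weight w u) :
    weightList w (ts.set i u') = weightList w ts := by
  induction ts generalizing i with
  | nil => simp at hu
  | cons t ts ih =>
    cases i with
    | zero =>
      simp only [List.getElem?_cons_zero, Option.some.injEq] at hu
      subst hu
      simp [weightList, h]
    | succ i =>
      simp only [List.getElem?_cons_succ] at hu
      simp [weightList, ih hu]

theorem weight_replaceAt (w : F → ℕ) {s v v' t : Tm F} {p : List ℕ}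
    (hv : subtermAt s p = some v) (ht : replaceAt s p v' = some t)
    (h : weight w v' = weight w v) : weight w t = weight w s := by
  induction p generalizing s t with
  | nil =>
    simp only [subtermAt, replaceAt, Option.some.injEq] at hv ht
    subst hv ht
    exact h
  | cons i p ih =>
    cases s with
    | var n => simp [subtermAt] at hv
    | fn g ts =>
      cases hu : ts[i]? with
      | none => simp [subtermAt, hu] at hv
      | some u =>
        simp only [subtermAt, hu] at hv
        simp only [replaceAt, hu, Option.map_eq_some_iff] at ht
        obtain ⟨u', hu', rfl⟩ := ht
        simp [weight, weightList_set w hu (ih hv hu')]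

end Tm

open Tm

theorem NF.eq_of_reflTransGen {A : Type} {r : A → A → Prop} {a b : A} (ha : NF r a)
    (h : Relation.ReflTransGen r a b) : a = b := by
  rcases Relation.ReflTransGen.cases_head_iff.1 h with h | ⟨c, hac, _⟩
  · exact h
  · exact absurd hac (ha c)

theorem not_churchRosserMod_of_convMod {F : Type} {R B : TRS F} {s t : Tm F}
    (hconv : ConvMod R B s t) (hs : NF (Rew R) s) (ht : NF (Rew R) t) (hst : ¬ simE B s t) :
    ¬ ChurchRosserMod R B := by
  intro hcr
  obtain ⟨u, v, hsu, huv, htv⟩ := hcr s t hconv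
  rw [← hs.eq_of_reflTransGen hsu, ← ht.eq_of_reflTransGen htv] at huv
  exact hst huv

theorem rew_root {F : Type} {R : TRS F} {l r : Tm F} (hlr : (l, r) ∈ R) (σ : ℕ → Tm F) :
    Rew R (subst σ l) (subst σ r) :=
  ⟨[], l, r, σ, hlr, by rw [subtermAt], by rw [replaceAt]⟩

section Weight

variable {F : Type} {B : TRS F} (w : F → ℕ)

theorem Rew.weight_eq
    (hB : ∀ l r, (l, r) ∈ B → ∀ σ, weight w (subst σ r) = weight w (subst σ l))
    {s t : Tm F} (h : Rew B s t) : weight w t = weight w s := by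
  obtain ⟨p, l, r, σ, hlr, hs, ht⟩ := h
  exact weight_replaceAt w hs ht (hB l r hlr σ)

theorem simE.weight_eq
    (hB : ∀ l r, (l, r) ∈ B → ∀ σ, weight w (subst σ r) = weight w (subst σ l))
    {s t : Tm F} (h : simE B s t) : weight w s = weight w t :=
  (Equivalence.eqvGen_iff (InvImage.equivalence _ (weight w) eq_equivalence)).1 <|
    Relation.EqvGen.mono (fun _ _ hst => (Rew.weight_eq w hB hst).symm) _ _ h

theorem weight_subst_of_mem_ACax {Ac : Set F} {l r : Tm F} (hlr : (l, r) ∈ ACax Ac)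
    (σ : ℕ → Tm F) : weight w (subst σ r) = weight w (subst σ l) := by
  obtain ⟨g, -, hlr | hlr⟩ := hlr <;>
    simp only [Prod.mk.injEq] at hlr <;> obtain ⟨rfl, rfl⟩ := hlr <;>
    simp only [subst, substList, weight, weightList] <;> omega

end Weight

theorem exists_fn_symbolsIn_of_mem_sympm_ACax {F : Type} {Ac : Set F} {q : Tm F × Tm F}
    (hq : q ∈ sympm (ACax Ac)) : ∃ g ts, q.1 = fn g ts ∧ SymbolsIn Ac q.1 := by
  rcases hq with ⟨g, hg, rfl | rfl⟩ | ⟨_, ⟨g, hg, rfl | rfl⟩, rfl⟩ <;>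
    exact ⟨g, _, rfl, .fn hg (by simp [SymbolsIn.var, SymbolsIn.fn hg])⟩

theorem symbolsIn_of_variantRule_sympm_ACax {F : Type} {Ac : Set F} {l r : Tm F}
    (h : ∃ q ∈ sympm (ACax Ac), VariantRule q (l, r)) :
    SymbolsIn Ac l ∧ ∀ n, l ≠ var n := by
  obtain ⟨q, hq, ρ, hl, -⟩ := h
  replace hl : rename ρ q.1 = l := hl
  obtain ⟨g, ts, hq1, hsym⟩ := exists_fn_symbolsIn_of_mem_sympm_ACax hq
  refine ⟨hl ▸ hsym.rename ρ, fun n hn => ?_⟩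
  rw [hq1] at hl
  simp [rename, subst, hn] at hl

open Sig18

theorem eq_of_variantRule_R18 {l r : Tm Sig18} (h : ∃ q ∈ R18, VariantRule q (l, r)) :
    ∃ a, l = fn f [var a, var a] ∧ r = var a := by
  obtain ⟨q, hq, ρ, hl, hr⟩ := h
  rw [R18, Set.mem_singleton_iff] at hq
  subst hq
  exact ⟨ρ 0, hl.symm, hr.symm⟩

theorem subtermAt_lhs_R18 {a : ℕ} {p : List ℕ} {g : Sig18} {ts : List (Tm Sig18)}
    (h : subtermAt (fn f [var a, var a]) p = some (fn g ts)) :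
    p = [] ∧ g = f ∧ ts = [var a, var a] := by
  cases p with
  | nil => simpa [subtermAt, eq_comm] using h
  | cons i p =>
    obtain ⟨u, hu, h⟩ := exists_mem_subtermAt_of_fn_cons h
    simp only [List.mem_cons, List.not_mem_nil, or_false, or_self] at hu
    subst hu
    cases subtermAt_var h

theorem Rew.exists_subtermAt_R18 {s t : Tm Sig18} (h : Rew R18 s t) :
    ∃ p u, subtermAt s p = some (fn f [u, u]) := by
  obtain ⟨p, l, r, σ, hlr, hs, -⟩ := h
  rw [R18, Set.mem_singleton_iff, Prod.mk.injEq] at hlr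
  obtain ⟨rfl, rfl⟩ := hlr
  exact ⟨p, σ 0, hs⟩

theorem symbolsIn_plus_var_var (a b : ℕ) : SymbolsIn {plus} (fn plus [var a, var b]) :=
  .fn rfl (by simp [SymbolsIn.var])

theorem nf_t18l : NF (Rew R18) t18l := fun _ h => by
  obtain ⟨p, u, hp⟩ := h.exists_subtermAt_R18
  cases (symbolsIn_plus_var_var 0 1).mem_of_subtermAt hp

theorem nf_t18r : NF (Rew R18) t18r := fun _ h => by
  obtain ⟨p, u, hp⟩ := h.exists_subtermAt_R18
  cases p with
  | nil =>
    obtain ⟨rfl, h⟩ : _ ∧ _ := by simpa [t18r, subtermAt] using hp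
    simp at h
  | cons i p =>
    obtain ⟨v, hv, hp⟩ := exists_mem_subtermAt_of_fn_cons hp
    simp only [List.mem_cons, List.not_mem_nil, or_false] at hv
    rcases hv with rfl | rfl
    · cases (symbolsIn_plus_var_var 0 1).mem_of_subtermAt hp
    · cases (symbolsIn_plus_var_var 1 0).mem_of_subtermAt hp

theorem convMod_t18l_t18r : ConvMod R18 AC18 t18l t18r := by
  have hR : Rew R18 (fn f [t18l, t18l]) t18l :=
    rew_root (Set.mem_singleton _) fun _ => t18l
  have hAC : Rew AC18 (fn f [t18l, t18l]) t18r :=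
    ⟨[1], fn plus [var 0, var 1], fn plus [var 1, var 0], var, ⟨plus, rfl, .inr rfl⟩,
      by simp [t18l, subtermAt, subst, substList],
      by simp [t18l, t18r, replaceAt, subst, substList]⟩
  exact .tail (.single (.inr (.inl hR))) (.inr (.inr (.rel _ _ hAC)))

theorem not_simE_t18l_t18r : ¬ simE AC18 t18l t18r := fun h => by
  have := simE.weight_eq (fun _ => 1) (fun _ _ => weight_subst_of_mem_ACax _) h
  simp [t18l, t18r, weight, weightList] at this

theorem cp_R18_R18 : CP R18 R18 = ∅ := by
  refine Set.eq_empty_iff_forall_notMem.2 ?_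
  rintro ⟨t, u⟩ ⟨p, s, l₁, r₁, l₂, r₂, σ, hv₁, hv₂, -, ⟨g, ts, hsub, -⟩, hroot, -⟩
  obtain ⟨a, rfl, rfl⟩ := eq_of_variantRule_R18 hv₁
  obtain ⟨b, rfl, rfl⟩ := eq_of_variantRule_R18 hv₂
  obtain ⟨rfl, -⟩ := subtermAt_lhs_R18 hsub
  exact hroot rfl ⟨Equiv.swap a b, by simp [rename, subst, substList],
    by simp [rename, subst]⟩

theorem cp_R18_sympm_AC18 : CP R18 (sympm AC18) = ∅ := by
  refine Set.eq_empty_iff_forall_notMem.2 ?_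
  rintro ⟨t, u⟩ ⟨p, s, l₁, r₁, l₂, r₂, σ, hv₁, hv₂, -, ⟨g, ts, hsub, hmgu, -⟩, -⟩
  obtain ⟨a, rfl, rfl⟩ := eq_of_variantRule_R18 hv₁
  obtain ⟨hsym, -⟩ := symbolsIn_of_variantRule_sympm_ACax hv₂
  obtain rfl : g = plus := hsym.mem_of_subtermAt hsub
  simp [Unifies, subst] at hmgu

theorem cp_sympm_AC18_R18 : CP (sympm AC18) R18 = ∅ := by
  refine Set.eq_empty_iff_forall_notMem.2 ?_
  rintro ⟨t, u⟩ ⟨p, s, l₁, r₁, l₂, r₂, σ, hv₁, hv₂, -, ⟨g, ts, hsub, hmgu, -⟩, -⟩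
  obtain ⟨hsym, hnvar⟩ := symbolsIn_of_variantRule_sympm_ACax hv₁
  obtain ⟨b, rfl, rfl⟩ := eq_of_variantRule_R18 hv₂
  obtain ⟨-, rfl, rfl⟩ := subtermAt_lhs_R18 hsub
  cases hsym with
  | var n => exact hnvar n rfl
  | fn hg _ =>
    obtain rfl : _ = plus := hg
    simp [Unifies, subst] at hmgu

/-- `{f(x,x) → x}` has no critical pairs with itself nor with `AC^±`, yet is
not Church–Rosser modulo AC: `x + y` and `f(x + y, y + x)` are convertible
modulo `R ∪ AC` but are distinct `R`-normal forms that are not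
AC-equivalent. -/
theorem stmt18 :
    CP R18 R18 = ∅ ∧
    CP R18 (sympm AC18) = ∅ ∧
    CP (sympm AC18) R18 = ∅ ∧
    ConvMod R18 AC18 t18l t18r ∧
    t18l ≠ t18r ∧
    NF (Rew R18) t18l ∧
    NF (Rew R18) t18r ∧
    ¬ simE AC18 t18l t18r ∧
    ¬ ChurchRosserMod R18 AC18 :=
  ⟨cp_R18_R18, cp_R18_sympm_AC18, cp_sympm_AC18_R18, convMod_t18l_t18r,
    by simp [t18l, t18r], nf_t18l, nf_t18r, not_simE_t18l_t18r,
    not_churchRosserMod_of_convMod convMod_t18l_t18r nf_t18l nf_t18r not_simE_t18l_t18r⟩
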